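/- The predictor polynomial of a Hermitian positive definite Toeplitz matrix is stable: if M^N is an N×N Hermitian positive definite Toeplitz matrix and p ∈ ℂ^N solves M^N p = e_0, then the polynomial P(z) = Σ_{k=0}^{N−1} p_k z^k has no zeros in the closed unit disk |z| ≤ 1. -/

import Mathlib

/-!
Suppose `P(z) = 0` with `‖z‖ ≤ 1`. Write `P = (X - z) Q` with `deg Q < N - 1`, and let `q`, `s` be
the coefficient vectors of `Q` and `X Q`, so that `p = s - z q`. For the inner product
`⟪x, y⟫ = x* T y` of the Toeplitz matrix `T`, the shift is an isometry on vectors with vanishing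
last entry, so `⟪s, s⟫ = ⟪q, q⟫`; and `⟪s, p⟫ = conj s₀ = 0` since `T p = e₀`. Hence
`⟪s, s⟫ = z ⟪s, q⟫`, which forces equality in Cauchy–Schwarz: `q` is a multiple of `s`. As the
shift is nilpotent this gives `Q = 0`, hence `p = 0`, contradicting `T p = e₀`.
-/

open scoped ComplexOrder

open Polynomial Matrix

variable {R : Type*}

def toeplitz (M : ℤ → R) (N : ℕ) : Matrix (Fin N) (Fin N) R :=
  Matrix.of fun k l : Fin N => M ((k : ℤ) - (l : ℤ))

namespace Polynomial

@[simp]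
theorem toFn_apply [Semiring R] {N : ℕ} (P : R[X]) (k : Fin N) : toFn N P k = P.coeff k :=
  rfl

theorem eval_ofFn [CommSemiring R] [DecidableEq R] {N : ℕ} (p : Fin N → R) (z : R) :
    (ofFn N p).eval z = ∑ k : Fin N, p k * z ^ (k : ℕ) := by
  simp [ofFn_eq_sum_monomial, eval_finsetSum]

theorem degree_divByMonic_X_sub_C_lt [CommRing R] {P : R[X]} {n : ℕ} (hP : P.degree ≤ n)
    (z : R) : (P /ₘ (X - C z)).degree < n := by
  nontriviality R
  rcases eq_or_ne P 0 with rfl | hP0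
  · simp
  · exact (degree_divByMonic_lt P _ hP0 (by simp)).trans_le hP

theorem eq_zero_of_toFn_eq_smul_toFn_X_mul [Semiring R] {N : ℕ} {Q : R[X]} {r : R}
    (hQ : Q.degree < N) (h : toFn N Q = r • toFn N (X * Q)) : Q = 0 := by
  have hcoeff : ∀ k < N, Q.coeff k = 0 := by
    intro k
    induction k with
    | zero => intro hk; simpa using congrFun h ⟨0, hk⟩
    | succ k ih => intro hk; simpa [coeff_X_mul, ih (by omega)] using congrFun h ⟨k + 1, hk⟩
  ext k
  by_cases hk : k < N
  · exact hcoeff k hk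
  · exact coeff_eq_zero_of_degree_lt (hQ.trans_le (by exact_mod_cast not_lt.1 hk))

theorem star_toFn_X_mul_dotProduct_toeplitz_mulVec [Semiring R] [StarRing R] (M : ℤ → R)
    {n : ℕ} {A B : R[X]} (hA : A.degree < n) (hB : B.degree < n) :
    star (toFn (n + 1) (X * A)) ⬝ᵥ toeplitz M (n + 1) *ᵥ toFn (n + 1) (X * B) =
      star (toFn (n + 1) A) ⬝ᵥ toeplitz M (n + 1) *ᵥ toFn (n + 1) B := by
  have hAn := coeff_eq_zero_of_degree_lt hA
  have hBn := coeff_eq_zero_of_degree_lt hB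
  calc _ = ∑ i : Fin n, star (A.coeff i) * ∑ j : Fin n, M (i - j) * B.coeff j := by
        simp [dotProduct, mulVec, toeplitz, Fin.sum_univ_succ, coeff_X_mul]
    _ = _ := by simp [dotProduct, mulVec, toeplitz, Fin.sum_univ_castSucc, hAn, hBn]

end Polynomial

theorem RCLike.exists_eq_smul_of_inner_self_eq_mul {𝕜 E : Type*} [RCLike 𝕜]
    [NormedAddCommGroup E] [InnerProductSpace 𝕜 E] {u v : E} {z : 𝕜} (hz : ‖z‖ ≤ 1)
    (huv : inner 𝕜 u u = inner 𝕜 v v) (h : inner 𝕜 u u = z * inner 𝕜 u v) :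
    ∃ r : 𝕜, v = r • u := by
  have hnorm : ‖u‖ = ‖v‖ := by
    rw [inner_self_eq_norm_sq_to_K, inner_self_eq_norm_sq_to_K] at huv
    exact (sq_eq_sq₀ (norm_nonneg _) (norm_nonneg _)).1 (by exact_mod_cast huv)
  have hle : ‖u‖ * ‖v‖ ≤ ‖(inner 𝕜 u v : 𝕜)‖ :=
    calc ‖u‖ * ‖v‖ = ‖(inner 𝕜 u u : 𝕜)‖ := by simp [inner_self_eq_norm_sq_to_K, ← hnorm, sq]
      _ ≤ ‖(inner 𝕜 u v : 𝕜)‖ := by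
        rw [h, norm_mul]
        exact mul_le_of_le_one_left (norm_nonneg _) hz
  rcases ((norm_inner_eq_norm_tfae 𝕜 u v).out 0 2).1 (le_antisymm (norm_inner_le_norm u v) hle)
    with rfl | hr
  · exact ⟨0, by simp [← norm_eq_zero, ← hnorm]⟩
  · exact hr

theorem Matrix.PosDef.exists_eq_smul_of_dotProduct_mulVec {𝕜 m : Type*} [RCLike 𝕜] [Fintype m]
    {A : Matrix m m 𝕜} (hA : A.PosDef) {u v : m → 𝕜} {z : 𝕜} (hz : ‖z‖ ≤ 1)
    (huv : star u ⬝ᵥ A *ᵥ u = star v ⬝ᵥ A *ᵥ v)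
    (h : star u ⬝ᵥ A *ᵥ u = z * (star u ⬝ᵥ A *ᵥ v)) :
    ∃ r : 𝕜, v = r • u := by
  simp only [dotProduct_comm (star _)] at huv h
  exact @RCLike.exists_eq_smul_of_inner_self_eq_mul 𝕜 (m → 𝕜) _ (A.toNormedAddCommGroup hA)
    (A.toInnerProductSpace hA.posSemidef) u v z hz huv h

theorem stmt13_general (N : ℕ) (hN : 0 < N) (M : ℤ → ℂ)
    (hpos : (Matrix.of fun k l : Fin N => M ((k : ℤ) - (l : ℤ))).PosDef)
    (p : Fin N → ℂ)
    (hp : (Matrix.of fun k l : Fin N => M ((k : ℤ) - (l : ℤ))).mulVec p =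
      (Pi.single ⟨0, hN⟩ 1 : Fin N → ℂ)) :
    ∀ z : ℂ, ‖z‖ ≤ 1 → (∑ k : Fin N, p k * z ^ (k : ℕ)) ≠ 0 := by
  intro z hz hroot
  obtain ⟨n, rfl⟩ := Nat.exists_eq_add_one_of_ne_zero hN.ne'
  change (toeplitz M (n + 1)).PosDef at hpos
  change toeplitz M (n + 1) *ᵥ p = _ at hp
  set T := toeplitz M (n + 1)
  set Q := ofFn (n + 1) p /ₘ (X - C z)
  have hPQ : ofFn (n + 1) p = (X - C z) * Q :=
    (mul_divByMonic_eq_iff_isRoot.2 (by rwa [IsRoot, eval_ofFn])).symm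
  have hQ : Q.degree < n := degree_divByMonic_X_sub_C_lt (Order.le_of_lt_succ (ofFn_degree_lt p)) z
  set q := toFn (n + 1) Q
  set s := toFn (n + 1) (X * Q)
  have hps : p = s - z • q := by
    rw [← toFn_comp_ofFn_eq_id _ p, hPQ, sub_mul, C_mul', map_sub, map_smul]
  have hshift : star s ⬝ᵥ T *ᵥ s = star q ⬝ᵥ T *ᵥ q :=
    star_toFn_X_mul_dotProduct_toeplitz_mulVec M hQ hQ
  have horth : star s ⬝ᵥ T *ᵥ p = 0 := by simp [hp, s]
  have hkey : star s ⬝ᵥ T *ᵥ s = z * (star s ⬝ᵥ T *ᵥ q) := by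
    rw [hps, mulVec_sub, mulVec_smul, dotProduct_sub, dotProduct_smul] at horth
    linear_combination horth
  obtain ⟨r, hr⟩ := hpos.exists_eq_smul_of_dotProduct_mulVec hz hshift hkey
  have hQ0 : Q = 0 :=
    eq_zero_of_toFn_eq_smul_toFn_X_mul (hQ.trans (by exact_mod_cast n.lt_succ_self)) hr
  have hp0 : p = 0 := (map_eq_zero_iff _ (injective_ofFn _)).1 (by simpa [hQ0] using hPQ)
  simpa [hp0] using congrFun hp 0

theorem stmt13 (N : ℕ) (hN : 0 < N) (M : ℤ → ℂ)
    (hherm : ∀ l : ℤ, M (-l) = star (M l))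
    (hpos : (Matrix.of fun k l : Fin N => M ((k : ℤ) - (l : ℤ))).PosDef)
    (p : Fin N → ℂ)
    (hp : (Matrix.of fun k l : Fin N => M ((k : ℤ) - (l : ℤ))).mulVec p =
      (Pi.single ⟨0, hN⟩ 1 : Fin N → ℂ)) :
    ∀ z : ℂ, ‖z‖ ≤ 1 → (∑ k : Fin N, p k * z ^ (k : ℕ)) ≠ 0 :=
  stmt13_general N hN M hpos p hp
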